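/- arXiv:2002.02165 — 4 statements merged into one kernel-verified Lean document; each statement's English description precedes it below -/
import Mathlib

section
/- For any vector x ∈ F_q^n, the pair weight satisfies w_H(x) + 1 ≤ w_p(x) ≤ 2·w_H(x) whenever 0 < w_H(x) < n, where w_H is the Hamming weight. -/
/-- Hamming weight of a vector. -/
noncomputable def hammingWt {F : Type*} [Field F] {n : ℕ} (x : Fin n → F) : ℕ :=
  Set.ncard {i : Fin n | x i ≠ 0}

/-- Pair weight of a vector (indices mod `n`). -/
noncomputable def pairWeight {F : Type*} [Field F] {n : ℕ} [NeZero n] (x : Fin n → F) : ℕ :=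
  Set.ncard {i : Fin n | x i ≠ 0 ∨ x (i + 1) ≠ 0}

/-!
The pair support of `x` is `supp x ∪ (supp x - 1)`, a union of two translates of the support,
whence the upper bound. For the lower bound, a nonempty proper subset of `ℤ/n` contains some
`i + 1` but not `i`; such an `i` lies in the pair support but not in the support.
-/

open Function Set

namespace Set

variable {G : Type*} [AddGroup G] {S : Set G}

theorem ncard_preimage_add_right (S : Set G) (a : G) : ((· + a) ⁻¹' S).ncard = S.ncard :=
  ncard_preimage_of_injective_subset_range (add_left_injective a)
    (fun s _ => ⟨s - a, sub_add_cancel s a⟩)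

theorem ncard_union_preimage_add_right_le (S : Set G) (a : G) :
    (S ∪ (· + a) ⁻¹' S).ncard ≤ 2 * S.ncard := by
  have := ncard_union_le S ((· + a) ⁻¹' S)
  rw [ncard_preimage_add_right] at this
  omega

theorem ncard_lt_ncard_union_preimage_add_right (hS : S.Finite) {a i : G} (hi : i ∉ S)
    (hia : i + a ∈ S) : S.ncard < (S ∪ (· + a) ⁻¹' S).ncard := by
  refine ncard_lt_ncard (ssubset_of_subset_not_subset subset_union_left fun h => hi ?_) ?_
  · exact h (Or.inr hia)
  · exact hS.union (hS.preimage (add_left_injective a).injOn)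

end Set

open Fin.NatCast in
theorem Fin.exists_notMem_add_one_mem {n : ℕ} [NeZero n] {S : Set (Fin n)} (hne : S.Nonempty)
    (hS : S ≠ univ) : ∃ i, i ∉ S ∧ i + 1 ∈ S := by
  -- otherwise the complement of `S` is closed under `+ 1`, so it is everything
  by_contra! hclosed
  obtain ⟨j, hj⟩ := (ne_univ_iff_exists_notMem S).1 hS
  have hshift : ∀ m : ℕ, j + (m : Fin n) ∉ S := by
    intro m
    induction m with
    | zero => simpa using hj
    | succ m ih => simpa [add_assoc] using hclosed _ ih
  obtain ⟨k, hk⟩ := hne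
  refine hshift (k - j).val ?_
  rwa [Fin.cast_val_eq_self, add_sub_cancel]

theorem hammingWt_eq_ncard_support {F : Type*} [Field F] {n : ℕ} (x : Fin n → F) :
    hammingWt x = (support x).ncard :=
  rfl

theorem pairWeight_eq_ncard_union_preimage {F : Type*} [Field F] {n : ℕ} [NeZero n]
    (x : Fin n → F) : pairWeight x = (support x ∪ (· + 1) ⁻¹' support x).ncard :=
  rfl

theorem hamming_add_one_le_pair_le_two_hamming_general {F : Type*} [Field F]
    {n : ℕ} [NeZero n] (x : Fin n → F) (h1 : 0 < hammingWt x) (h2 : hammingWt x < n) :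
    hammingWt x + 1 ≤ pairWeight x ∧ pairWeight x ≤ 2 * hammingWt x := by
  rw [hammingWt_eq_ncard_support] at h1 h2 ⊢
  rw [pairWeight_eq_ncard_union_preimage]
  have hne : (support x).Nonempty := nonempty_of_ncard_ne_zero h1.ne'
  have hne_univ : support x ≠ univ := by
    rintro h
    simp [h] at h2
  obtain ⟨i, hi, hi1⟩ := Fin.exists_notMem_add_one_mem hne hne_univ
  exact ⟨ncard_lt_ncard_union_preimage_add_right (toFinite _) hi hi1,
    ncard_union_preimage_add_right_le _ _⟩

theorem hamming_add_one_le_pair_le_two_hamming {F : Type*} [Field F] [Fintype F]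
    {n : ℕ} [NeZero n] (x : Fin n → F) (h1 : 0 < hammingWt x) (h2 : hammingWt x < n) :
    hammingWt x + 1 ≤ pairWeight x ∧ pairWeight x ≤ 2 * hammingWt x :=
  hamming_add_one_le_pair_le_two_hamming_general x h1 h2
end

section
/- Let C be an [n,k]-linear code over F_q with k ≥ 2 and n ≥ 2. For 2 ≤ r ≤ k-1, the r-minimal pair weights satisfy the strict inequality d_p^{r-1}(C) < d_p^r(C). -/
/-- The pair support of a subspace `D ≤ F^n` (indices mod `n`). -/
def pairSupport {F : Type*} [Field F] {n : ℕ} [NeZero n] (D : Submodule F (Fin n → F)) :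
    Set (Fin n) :=
  {i | ∃ x ∈ D, x i ≠ 0 ∨ x (i + 1) ≠ 0}

/-- The `r`-minimal pair weight `d_p^r(C)` of a linear code `C ≤ F^n`. -/
noncomputable def dp {F : Type*} [Field F] {n : ℕ} [NeZero n]
    (C : Submodule F (Fin n → F)) (r : ℕ) : ℕ :=
  sInf {m | ∃ D : Submodule F (Fin n → F), D ≤ C ∧ Module.finrank F D = r ∧
    (pairSupport D).ncard = m}

/-!
Take `D ≤ C` of dimension `r` attaining `d_p^r(C)`. If the pair support of `D` is not all of
`ℤ/n`, some `i` lies in it while `i + 1` does not; then coordinate `i + 1` vanishes on `D`, so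
`{x ∈ D | x_i = x_{i+1} = 0}` is a hyperplane of `D` whose pair support misses `i`. Otherwise
`D` has pair weight `n`, while `{x ∈ C | x_0 = x_1 = 0}` has dimension at least `k - 2 ≥ r - 1`
and every subspace of it has pair weight below `n`.
-/

open Module Set

namespace Submodule

variable {K V : Type*} [DivisionRing K] [AddCommGroup V] [Module K V]

theorem exists_le_finrank_eq (p : Submodule K V) {m : ℕ} (h : m ≤ finrank K p) :
    ∃ q ≤ p, finrank K q = m := by
  obtain ⟨s, hcard, hli⟩ := exists_finset_linearIndependent_of_le_finrank h
  refine ⟨(span K (s : Set p)).map p.subtype, map_subtype_le _ _, ?_⟩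
  rw [finrank_map_subtype_eq, finrank_span_finset_eq_card hli, hcard]

theorem finrank_inf_ker_add_one [FiniteDimensional K V] {f : Dual K V} {p : Submodule K V}
    (h : ¬p ≤ LinearMap.ker f) : finrank K ↥(p ⊓ LinearMap.ker f) + 1 = finrank K p := by
  have hf : f.domRestrict p ≠ 0 := fun h0 =>
    h fun x hx => LinearMap.congr_fun h0 ⟨x, hx⟩
  rw [← Dual.finrank_ker_add_one_of_ne_zero hf, LinearMap.ker_domRestrict, ← map_comap_subtype,
    finrank_map_subtype_eq]

theorem finrank_le_finrank_inf_ker_add_one [FiniteDimensional K V] (f : Dual K V)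
    (p : Submodule K V) : finrank K p ≤ finrank K ↥(p ⊓ LinearMap.ker f) + 1 := by
  by_cases h : p ≤ LinearMap.ker f
  · rw [inf_eq_left.mpr h]
    omega
  · exact (finrank_inf_ker_add_one h).ge

end Submodule

open Fin.NatCast in
theorem Fin.exists_mem_add_one_notMem {n : ℕ} [NeZero n] {S : Set (Fin n)} (hne : S.Nonempty)
    (hS : S ≠ univ) : ∃ i ∈ S, i + 1 ∉ S := by
  by_contra! hsucc
  obtain ⟨j, hj⟩ := hne
  have hshift : ∀ m : ℕ, j + (m : Fin n) ∈ S := by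
    intro m
    induction m with
    | zero => simpa using hj
    | succ m ih => simpa [← add_assoc] using hsucc _ ih
  exact hS (eq_univ_of_forall fun i => by simpa using hshift (i - j).val)

section PairSupport

variable {F : Type*} [Field F] {n : ℕ} [NeZero n]

def pairKer (D : Submodule F (Fin n → F)) (i : Fin n) : Submodule F (Fin n → F) :=
  D ⊓ (LinearMap.ker (LinearMap.proj i) ⊓ LinearMap.ker (LinearMap.proj (i + 1)))

@[simp] theorem mem_pairKer {D : Submodule F (Fin n → F)} {i : Fin n} {x : Fin n → F} :
    x ∈ pairKer D i ↔ x ∈ D ∧ x i = 0 ∧ x (i + 1) = 0 := by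
  simp [pairKer]

theorem pairKer_le (D : Submodule F (Fin n → F)) (i : Fin n) : pairKer D i ≤ D :=
  inf_le_left

theorem pairSupport_mono {D E : Submodule F (Fin n → F)} (h : E ≤ D) :
    pairSupport E ⊆ pairSupport D := fun _ ⟨x, hx, hx'⟩ => ⟨x, h hx, hx'⟩

theorem notMem_pairSupport_pairKer (D : Submodule F (Fin n → F)) (i : Fin n) :
    i ∉ pairSupport (pairKer D i) := by
  rintro ⟨x, hx, hx'⟩
  obtain ⟨-, h₁, h₂⟩ := mem_pairKer.mp hx
  tauto

theorem pairSupport_nonempty {D : Submodule F (Fin n → F)} (hD : D ≠ ⊥) :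
    (pairSupport D).Nonempty := by
  obtain ⟨x, hxD, hx⟩ := Submodule.exists_mem_ne_zero_of_ne_bot hD
  obtain ⟨j, hj⟩ := Function.ne_iff.mp hx
  exact ⟨j, x, hxD, Or.inl hj⟩

theorem finrank_le_finrank_pairKer_add_two (D : Submodule F (Fin n → F)) (i : Fin n) :
    finrank F D ≤ finrank F (pairKer D i) + 2 := by
  have h₁ := Submodule.finrank_le_finrank_inf_ker_add_one (LinearMap.proj i) D
  have h₂ := Submodule.finrank_le_finrank_inf_ker_add_one (LinearMap.proj (i + 1))
    (D ⊓ LinearMap.ker (LinearMap.proj i))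
  rw [inf_assoc] at h₂
  exact h₁.trans (by unfold pairKer; omega)

theorem finrank_pairKer_add_one {D : Submodule F (Fin n → F)} {i : Fin n}
    (hi : i ∈ pairSupport D) (hi' : i + 1 ∉ pairSupport D) :
    finrank F (pairKer D i) + 1 = finrank F D := by
  have hvanish : ∀ x ∈ D, x (i + 1) = 0 := fun x hx => by
    by_contra h
    exact hi' ⟨x, hx, Or.inl h⟩
  have hker : pairKer D i = D ⊓ LinearMap.ker (LinearMap.proj i) := by
    ext x
    simp +contextual [hvanish]
  rw [hker]
  refine Submodule.finrank_inf_ker_add_one fun hle => ?_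
  obtain ⟨x, hx, hx'⟩ := hi
  rcases hx' with h | h
  · exact h (hle hx)
  · exact h (hvanish x hx)

theorem exists_finrank_eq_ncard_pairSupport_lt {C D : Submodule F (Fin n → F)} {r : ℕ}
    (hDC : D ≤ C) (hD : finrank F D = r + 1) (hC : r + 2 ≤ finrank F C) :
    ∃ E ≤ C, finrank F E = r ∧ (pairSupport E).ncard < (pairSupport D).ncard := by
  suffices ∃ E ≤ C, finrank F E = r ∧ pairSupport E ⊆ pairSupport D ∧
      ∃ i ∈ pairSupport D, i ∉ pairSupport E by
    obtain ⟨E, hEC, hE, hED, i, hiD, hiE⟩ := this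
    exact ⟨E, hEC, hE, ncard_lt_ncard ((ssubset_iff_of_subset hED).mpr ⟨i, hiD, hiE⟩)⟩
  by_cases huniv : pairSupport D = univ
  · obtain ⟨E, hE, hEr⟩ := (pairKer C 0).exists_le_finrank_eq
      (m := r) (by have := finrank_le_finrank_pairKer_add_two C 0; omega)
    exact ⟨E, hE.trans (pairKer_le C 0), hEr, huniv ▸ subset_univ _, 0, huniv ▸ mem_univ _,
      fun h => notMem_pairSupport_pairKer C 0 (pairSupport_mono hE h)⟩
  · have hD0 : D ≠ ⊥ := fun h => by rw [h, finrank_bot] at hD; omega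
    obtain ⟨i, hi, hi'⟩ := Fin.exists_mem_add_one_notMem (pairSupport_nonempty hD0) huniv
    have := finrank_pairKer_add_one hi hi'
    exact ⟨pairKer D i, (pairKer_le D i).trans hDC, by omega,
      pairSupport_mono (pairKer_le D i), i, hi, notMem_pairSupport_pairKer D i⟩

end PairSupport

section MinimalPairWeight

variable {F : Type*} [Field F] {n : ℕ} [NeZero n] (C : Submodule F (Fin n → F))

theorem dp_le_ncard_pairSupport {E : Submodule F (Fin n → F)} (hE : E ≤ C) :
    dp C (finrank F E) ≤ (pairSupport E).ncard :=
  Nat.sInf_le ⟨E, hE, rfl, rfl⟩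

theorem exists_ncard_pairSupport_eq_dp {r : ℕ} (hr : r ≤ finrank F C) :
    ∃ D ≤ C, finrank F D = r ∧ (pairSupport D).ncard = dp C r := by
  obtain ⟨D, hD, hDr⟩ := C.exists_le_finrank_eq hr
  exact Nat.sInf_mem (s := {m | ∃ D ≤ C, finrank F D = r ∧ (pairSupport D).ncard = m})
    ⟨_, D, hD, hDr, rfl⟩

end MinimalPairWeight

theorem dp_strict_mono_general {F : Type*} [Field F] {n k : ℕ} [NeZero n]
    (C : Submodule F (Fin n → F)) (hC : Module.finrank F C = k)
    (r : ℕ) (hr : 2 ≤ r) (hr' : r ≤ k - 1) :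
    dp C (r - 1) < dp C r := by
  obtain ⟨D, hDC, hDr, hDdp⟩ := exists_ncard_pairSupport_eq_dp C (r := r) (by omega)
  obtain ⟨E, hEC, hEr, hlt⟩ :=
    exists_finrank_eq_ncard_pairSupport_lt (r := r - 1) hDC (by omega) (by omega)
  calc dp C (r - 1) = dp C (finrank F E) := by rw [hEr]
    _ ≤ (pairSupport E).ncard := dp_le_ncard_pairSupport C hEC
    _ < (pairSupport D).ncard := hlt
    _ = dp C r := hDdp

theorem dp_strict_mono {F : Type*} [Field F] [Fintype F] {n k : ℕ} [NeZero n]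
    (hn : 2 ≤ n) (C : Submodule F (Fin n → F)) (hC : Module.finrank F C = k)
    (hk : 2 ≤ k) (r : ℕ) (hr : 2 ≤ r) (hr' : r ≤ k - 1) :
    dp C (r - 1) < dp C r :=
  dp_strict_mono_general C hC r hr hr'
end

section
/- Singleton bound for generalized pair weights: for an [n,k]-linear code C over F_q and any 1 ≤ r ≤ k-1, d_p^r(C) ≤ n - k + r + 1, and d_p^k(C) ≤ n. -/
lemma card_filter_val {n : ℕ} (P : ℕ → Prop) [DecidablePred P] :
    (Finset.univ.filter (fun i : Fin n => P i.val)).card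
      = ((Finset.range n).filter P).card := by
  rw [Finset.card_filter, Finset.card_filter]
  exact Fin.sum_univ_eq_sum_range (fun j => if P j then 1 else 0) n

lemma exists_submodule_le_finrank_eq {F V : Type*} [Field F] [AddCommGroup V] [Module F V]
    (W : Submodule F V) {r : ℕ} (hr : r ≤ Module.finrank F W) :
    ∃ D : Submodule F V, D ≤ W ∧ Module.finrank F D = r := by
  obtain ⟨s, hcard, hli⟩ :=
    exists_finset_linearIndependent_of_le_finrank (R := F) (M := ↥W) hr
  refine ⟨Submodule.map W.subtype (Submodule.span F (s : Set ↥W)), Submodule.map_subtype_le _ _, ?_⟩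
  have heq := LinearEquiv.finrank_eq
    (Submodule.equivMapOfInjective W.subtype W.injective_subtype (Submodule.span F (s : Set ↥W)))
  rw [← heq, finrank_span_finset_eq_card hli, hcard]

/-- Singleton bound for generalized pair weights. -/
theorem dp_singleton_bound {F : Type*} [Field F] [Fintype F] {n k : ℕ} [NeZero n]
    (C : Submodule F (Fin n → F)) (hC : Module.finrank F C = k) :
    (∀ r : ℕ, 1 ≤ r → r ≤ k - 1 → dp C r ≤ n - k + r + 1) ∧ dp C k ≤ n := by
  classical
  have hkn : k ≤ n := by
    rw [← hC]
    calc Module.finrank F C ≤ Module.finrank F (Fin n → F) := C.finrank_le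
    _ = n := by simp
  constructor
  · intro r hr1 hrk
    set m := n - k + r with hm
    have hk2 : 2 ≤ k := by omega
    have hmn : m + 1 ≤ n := by omega
    -- the window S = {1, ..., m}
    set S : Finset (Fin n) := Finset.univ.filter (fun i : Fin n => 1 ≤ i.val ∧ i.val ≤ m)
      with hS
    have hScard : S.card = m := by
      rw [hS, card_filter_val (fun j => 1 ≤ j ∧ j ≤ m)]
      have : (Finset.range n).filter (fun j => 1 ≤ j ∧ j ≤ m) = Finset.Icc 1 m := by
        ext j
        simp only [Finset.mem_filter, Finset.mem_range, Finset.mem_Icc]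
        omega
      rw [this, Nat.card_Icc]
      omega
    -- the subspace of vectors supported on S
    set f : (Fin n → F) →ₗ[F] (↥(↑(Sᶜ) : Set (Fin n)) → F) :=
      LinearMap.funLeft F F Subtype.val with hf
    have hU : ∀ x ∈ LinearMap.ker f, ∀ i : Fin n, i ∉ S → x i = 0 := by
      intro x hx i hi
      have := congrFun (LinearMap.mem_ker.mp hx) ⟨i, by simpa using hi⟩
      simpa [hf, LinearMap.funLeft] using this
    have hUrank : m ≤ Module.finrank F (LinearMap.ker f) := by
      have hrn := LinearMap.finrank_range_add_finrank_ker f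
      rw [show Module.finrank F (Fin n → F) = n by simp] at hrn
      have h2 : Module.finrank F (LinearMap.range f) ≤ n - m := by
        calc Module.finrank F (LinearMap.range f)
            ≤ Module.finrank F (↥(↑(Sᶜ) : Set (Fin n)) → F) :=
              (LinearMap.range f).finrank_le
          _ = Fintype.card (↥(↑(Sᶜ) : Set (Fin n))) := by
              rw [Module.finrank_pi]
          _ = (Sᶜ).card := Fintype.card_coe _
          _ = n - m := by rw [Finset.card_compl, hScard, Fintype.card_fin]
      omega
    -- intersect with C
    have hCU : r ≤ Module.finrank F ↥(C ⊓ LinearMap.ker f) := by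
      have hsum := Submodule.finrank_sup_add_finrank_inf_eq C (LinearMap.ker f)
      have hle : Module.finrank F ↥(C ⊔ LinearMap.ker f) ≤ n := by
        calc Module.finrank F ↥(C ⊔ LinearMap.ker f) ≤ Module.finrank F (Fin n → F) :=
              (C ⊔ LinearMap.ker f).finrank_le
          _ = n := by simp
      rw [hC] at hsum
      omega
    obtain ⟨D, hDle, hDrank⟩ := exists_submodule_le_finrank_eq (C ⊓ LinearMap.ker f) hCU
    have hDC : D ≤ C := hDle.trans inf_le_left
    have hDU : D ≤ LinearMap.ker f := hDle.trans inf_le_right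
    -- bound the pair support of D
    set T : Finset (Fin n) := Finset.univ.filter (fun i : Fin n => i.val ≤ m) with hT
    have hTcard : T.card = m + 1 := by
      rw [hT, card_filter_val (fun j => j ≤ m)]
      have : (Finset.range n).filter (fun j => j ≤ m) = Finset.range (m + 1) := by
        ext j
        simp only [Finset.mem_filter, Finset.mem_range]
        omega
      rw [this, Finset.card_range]
    have hsub : pairSupport D ⊆ (T : Set (Fin n)) := by
      intro i hi
      obtain ⟨x, hxD, hx⟩ := hi
      simp only [hT, Finset.coe_filter, Set.mem_setOf_eq, Finset.mem_coe,
        Finset.mem_univ, true_and]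
      rcases hx with hx | hx
      · by_contra hcon
        exact hx (hU x (hDU hxD) i (by simp [hS, Finset.mem_filter]; omega))
      · by_contra hcon
        have hi1 : (i + 1 : Fin n) ∈ S := by
          by_contra h
          exact hx (hU x (hDU hxD) _ h)
        simp only [hS, Finset.mem_filter, Finset.mem_univ, true_and] at hi1
        have hlt : i.val < n := i.is_lt
        have hval : (i + 1 : Fin n).val = (i.val + 1 % n) % n := by
          rw [Fin.val_add, Fin.val_one']
        rcases Nat.lt_or_ge 1 n with h2 | h2
        · rw [Nat.mod_eq_of_lt h2] at hval
          rcases Nat.lt_or_ge (i.val + 1) n with hlt2 | hge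
          · rw [Nat.mod_eq_of_lt hlt2] at hval
            omega
          · rw [show i.val + 1 = n by omega, Nat.mod_self] at hval
            omega
        · have hn1 : n = 1 := by have := NeZero.pos n; omega
          subst hn1
          omega
    have hbound : (pairSupport D).ncard ≤ m + 1 := by
      calc (pairSupport D).ncard ≤ (T : Set (Fin n)).ncard :=
            Set.ncard_le_ncard hsub (Set.toFinite _)
        _ = T.card := Set.ncard_coe_finset T
        _ = m + 1 := hTcard
    calc dp C r ≤ (pairSupport D).ncard := Nat.sInf_le ⟨D, hDC, hDrank, rfl⟩
      _ ≤ m + 1 := hbound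
  · calc dp C k ≤ (pairSupport C).ncard := Nat.sInf_le ⟨C, le_rfl, hC, rfl⟩
      _ ≤ (Set.univ : Set (Fin n)).ncard :=
          Set.ncard_le_ncard (Set.subset_univ _) Set.finite_univ
      _ = n := by rw [Set.ncard_univ, Nat.card_eq_fintype_card, Fintype.card_fin]
end

section
/- Let C be an [n,k]-linear code over F_q with generator matrix G having columns G_0, ..., G_{n-1}. For any subspace D ≤ C with D = {yG : y ∈ D̃} for a subspace D̃ ≤ F_q^k, the pair weight satisfies w_p(D) = n - |{0 ≤ i ≤ n-1 : span(G_i, G_{i+1}) ⊆ D̃^⊥}| (indices mod n). -/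
/-- The orthogonal complement of a subspace of `F^k` under the standard bilinear form. -/
def perp {F : Type*} [Field F] {k : ℕ} (W : Submodule F (Fin k → F)) :
    Submodule F (Fin k → F) where
  carrier := {x | ∀ v ∈ W, dotProduct x v = 0}
  add_mem' := by
    intro a b ha hb v hv
    simp [add_dotProduct, ha v hv, hb v hv]
  zero_mem' := by
    intro v hv
    simp
  smul_mem' := by
    intro c a ha v hv
    simp [smul_dotProduct, ha v hv]

/-! The `i`-th coordinate of `y G` is `G_i ⬝ y`, so a position `i` misses the pair support of
`D̃ G` exactly when both `G_i` and `G_{i+1}` are orthogonal to `D̃`: the pair support is the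
complement of the counted set. -/

theorem vecMul_apply_eq_transpose_dotProduct {R : Type*} [CommSemiring R] {m ι : Type*}
    [Fintype m] (G : Matrix m ι R) (y : m → R) (i : ι) :
    Matrix.vecMul y G i = dotProduct (G.transpose i) y :=
  dotProduct_comm _ _

theorem transpose_mem_perp_iff {F : Type*} [Field F] {k : ℕ} {ι : Type*}
    (G : Matrix (Fin k) ι F) (Dt : Submodule F (Fin k → F)) (i : ι) :
    G.transpose i ∈ perp Dt ↔ ∀ y ∈ Dt, Matrix.vecMul y G i = 0 := by
  simp only [vecMul_apply_eq_transpose_dotProduct]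
  rfl

theorem mem_pairSupport_map_vecMulLinear_iff {F : Type*} [Field F] {n k : ℕ} [NeZero n]
    (G : Matrix (Fin k) (Fin n) F) (Dt : Submodule F (Fin k → F)) (i : Fin n) :
    i ∈ pairSupport (Dt.map G.vecMulLinear) ↔
      ¬ Submodule.span F {G.transpose i, G.transpose (i + 1)} ≤ perp Dt := by
  simp only [Submodule.span_le, Set.insert_subset_iff, Set.singleton_subset_iff, SetLike.mem_coe,
    transpose_mem_perp_iff, ← forall₂_and, pairSupport, Set.mem_ofPred_eq, Submodule.mem_map,
    Matrix.vecMulLinear_apply, exists_exists_and_eq_and, not_forall, not_and_or, exists_prop]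

theorem pair_weight_eq_n_sub_count_general {F : Type*} [Field F] {n k : ℕ} [NeZero n]
    (G : Matrix (Fin k) (Fin n) F)
    (Dt : Submodule F (Fin k → F)) :
    (pairSupport (Dt.map G.vecMulLinear)).ncard =
      n - Set.ncard {i : Fin n |
        Submodule.span F {G.transpose i, G.transpose (i + 1)} ≤ perp Dt} := by
  have hcompl : pairSupport (Dt.map G.vecMulLinear) =
      {i : Fin n | Submodule.span F {G.transpose i, G.transpose (i + 1)} ≤ perp Dt}ᶜ :=
    Set.ext (mem_pairSupport_map_vecMulLinear_iff G Dt)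
  rw [hcompl, Set.ncard_compl, Nat.card_fin]

/-- If `G` is a generator matrix (rank `k`) of `C` and `D = D̃·G`, then
`w_p(D) = n - #{i : span(G_i, G_{i+1}) ⊆ D̃^⊥}`. -/
theorem pair_weight_eq_n_sub_count {F : Type*} [Field F] {n k : ℕ} [NeZero n]
    (G : Matrix (Fin k) (Fin n) F) (hG : Function.Injective G.vecMulLinear)
    (Dt : Submodule F (Fin k → F)) :
    (pairSupport (Dt.map G.vecMulLinear)).ncard =
      n - Set.ncard {i : Fin n |
        Submodule.span F {G.transpose i, G.transpose (i + 1)} ≤ perp Dt} :=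
  pair_weight_eq_n_sub_count_general G Dt
end
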